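/- For any G ∈ ℝ^{n×n}, the KKT system X = Π_C(𝓑*y + G), 𝓑X = b, y ∈ Range(𝓑) has a nonempty solution set (X, y) ∈ ℝ^{n×n} × ℝ^{2n}, and for every τ ∈ ℝ the level set {y ∈ Range(𝓑) : φ(y) ≤ τ} is convex, closed and bounded. -/

import Mathlib

open Filter Topology
open scoped RealInnerProductSpace

/-- The space `ℝ^{n×n}` of square matrices endowed with the Frobenius (Euclidean)
inner product, realized as a Euclidean space indexed by pairs. -/
abbrev MatSp (n : ℕ) := EuclideanSpace ℝ (Fin n × Fin n)

/-- The space `ℝ^{2n}`, realized as a Euclidean space indexed by `Fin n ⊕ Fin n`. -/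
abbrev VecSp (n : ℕ) := EuclideanSpace ℝ (Fin n ⊕ Fin n)

/-- The Birkhoff polytope `𝔅ₙ` of doubly stochastic matrices. -/
def Birkhoff (n : ℕ) : Set (MatSp n) :=
  {X | (∀ i, ∑ j, X (i, j) = 1) ∧ (∀ j, ∑ i, X (i, j) = 1) ∧ ∀ q, 0 ≤ X q}

/-- The linear map `𝓑(X) = [Xe; Xᵀe]`. -/
noncomputable def opB {n : ℕ} (X : MatSp n) : VecSp n :=
  WithLp.toLp 2 (fun s => Sum.elim (fun i => ∑ j, X (i, j)) (fun j => ∑ i, X (i, j)) s)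

/-- The adjoint `𝓑*` of `𝓑`: `(𝓑*y)_{ij} = y_i + y_{n+j}`. -/
noncomputable def opBstar {n : ℕ} (y : VecSp n) : MatSp n :=
  WithLp.toLp 2 (fun q : Fin n × Fin n => y (Sum.inl q.1) + y (Sum.inr q.2))

/-- The vector `b = [e; e] ∈ ℝ^{2n}` of all ones. -/
noncomputable def bvec (n : ℕ) : VecSp n := WithLp.toLp 2 (fun _ => 1)

/-- The entrywise projection `Π_C` onto the nonnegative orthant `C`. -/
noncomputable def projC {n : ℕ} (X : MatSp n) : MatSp n := WithLp.toLp 2 (fun q => max (X q) 0)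

/-- The dual objective `φ(y) = ½‖Π_C(𝓑*y + G)‖² − ⟨b, y⟩ − ½‖G‖²`. -/
noncomputable def phiObj {n : ℕ} (G : MatSp n) (y : VecSp n) : ℝ :=
  (1 / 2) * ‖projC (opBstar y + G)‖ ^ 2 - ⟪bvec n, y⟫ - (1 / 2) * ‖G‖ ^ 2

/-- The gradient `∇φ(y) = 𝓑 Π_C(𝓑*y + G) − b`. -/
noncomputable def gradPhi {n : ℕ} (G : MatSp n) (y : VecSp n) : VecSp n :=
  opB (projC (opBstar y + G)) - bvec n

section aux
variable {n : ℕ}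

lemma inner_eq_sum {ι : Type*} [Fintype ι] (x y : EuclideanSpace ℝ ι) :
    ⟪x, y⟫ = ∑ i, x i * y i := by
  simp [PiLp.inner_apply, RCLike.inner_apply, mul_comm]

lemma normsq_eq {ι : Type*} [Fintype ι] (x : EuclideanSpace ℝ ι) :
    ‖x‖ ^ 2 = ∑ i, x i ^ 2 := by
  rw [EuclideanSpace.norm_sq_eq]; simp [Real.norm_eq_abs, sq_abs]

lemma opB_apply_inl (X : MatSp n) (i : Fin n) : opB X (Sum.inl i) = ∑ j, X (i, j) := rfl
lemma opB_apply_inr (X : MatSp n) (j : Fin n) : opB X (Sum.inr j) = ∑ i, X (i, j) := rfl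

/-- adjoint identity -/
lemma adjoint_eq (X : MatSp n) (y : VecSp n) : ⟪opB X, y⟫ = ⟪X, opBstar y⟫ := by
  rw [inner_eq_sum, inner_eq_sum, Fintype.sum_sum_type, Fintype.sum_prod_type]
  simp only [opB_apply_inl, opB_apply_inr, opBstar]
  simp only [mul_add, Finset.sum_add_distrib, Finset.sum_mul]
  congr 1
  rw [Finset.sum_comm]


lemma opBstar_add (y v : VecSp n) : opBstar (y + v) = opBstar y + opBstar v := by
  ext q; show (y (Sum.inl q.1) + v (Sum.inl q.1)) + _ = _; simp [opBstar]; ring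

lemma opBstar_smul (t : ℝ) (v : VecSp n) : opBstar (t • v) = t • opBstar v := by
  ext q; show t * v (Sum.inl q.1) + t * v (Sum.inr q.2) = t * _; simp [opBstar]; ring

/-- key lower bound on phi -/
lemma phi_lower (G : MatSp n) (y : VecSp n) (X : MatSp n) (hX : ∀ q, 0 ≤ X q) :
    ⟪X, G⟫ - (1/2) * ‖X‖^2 - (1/2) * ‖G‖^2 + ⟪opB X - bvec n, y⟫ ≤ phiObj G y := by
  have h1 : ⟪opB X - bvec n, y⟫ = ⟪opB X, y⟫ - ⟪bvec n, y⟫ := by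
    rw [← inner_sub_left]
  have h2 : ⟪X, G⟫ + ⟪X, opBstar y⟫ - (1/2) * ‖X‖^2 ≤ (1/2) * ‖projC (opBstar y + G)‖^2 := by
    have : ⟪X, G⟫ + ⟪X, opBstar y⟫ = ∑ q, X q * (opBstar y + G) q := by
      rw [inner_eq_sum, inner_eq_sum, ← Finset.sum_add_distrib]
      exact Finset.sum_congr rfl fun q _ => by
        show _ = X q * (opBstar y q + G q); ring
    rw [this, normsq_eq (projC (opBstar y + G)), normsq_eq X, Finset.mul_sum, Finset.mul_sum,
      ← Finset.sum_sub_distrib]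
    refine Finset.sum_le_sum fun q _ => ?_
    have := hX q
    simp only [projC]
    rcases le_or_gt ((opBstar y + G) q) 0 with h | h
    · rw [max_eq_right h]; nlinarith
    · rw [max_eq_left h.le]; nlinarith [sq_nonneg (X q - (opBstar y + G) q)]
  rw [phiObj]
  rw [h1, adjoint_eq]
  linarith

/-- descent (upper) bound on phi -/
lemma phi_upper (G : MatSp n) (y v : VecSp n) :
    phiObj G (y + v) ≤ phiObj G y + (⟪opB (projC (opBstar y + G)), v⟫ - ⟪bvec n, v⟫)
      + (1/2) * ‖opBstar v‖^2 := by
  have key : ‖projC (opBstar (y+v) + G)‖^2 ≤ ‖projC (opBstar y + G)‖^2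
      + 2 * ⟪projC (opBstar y + G), opBstar v⟫ + ‖opBstar v‖^2 := by
    rw [normsq_eq, normsq_eq, normsq_eq, inner_eq_sum, opBstar_add, Finset.mul_sum,
      ← Finset.sum_add_distrib, ← Finset.sum_add_distrib]
    refine Finset.sum_le_sum fun q _ => ?_
    show max ((opBstar y q + opBstar v q) + G q) 0 ^ 2 ≤
      max (opBstar y q + G q) 0 ^ 2 + 2 * (max (opBstar y q + G q) 0 * opBstar v q) + opBstar v q ^ 2
    set z := opBstar y q + G q
    set s := opBstar v q
    have h0 : z ≤ max z 0 := le_max_left _ _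
    have h1 : (0:ℝ) ≤ max z 0 := le_max_right _ _
    have h2 : max (z + s + 0*1) 0 ≤ max (max z 0 + s) 0 := by
      apply max_le_max _ le_rfl; linarith
    have h3 : max (max z 0 + s) 0 ^ 2 ≤ (max z 0 + s) ^ 2 := by
      rcases le_or_gt (max z 0 + s) 0 with h | h
      · rw [max_eq_right h]; simpa using sq_nonneg (max z 0 + s)
      · rw [max_eq_left h.le]
    calc max (opBstar y q + opBstar v q + G q) 0 ^2 = max (z + s + 0*1) 0 ^2 := by simp only [z, s]; ring_nf
      _ ≤ max (max z 0 + s) 0 ^2 := by nlinarith [h2, le_max_right (z+s+0*1) (0:ℝ)]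
      _ ≤ (max z 0 + s)^2 := h3
      _ = max z 0 ^2 + 2*(max z 0 * s) + s^2 := by ring
  have hadj : ⟪projC (opBstar y + G), opBstar v⟫ = ⟪opB (projC (opBstar y + G)), v⟫ :=
    (adjoint_eq _ _).symm
  have hb : ⟪bvec n, y + v⟫ = ⟪bvec n, y⟫ + ⟪bvec n, v⟫ := inner_add_right _ _ _
  simp only [phiObj]
  have : opBstar (y + v) + G = opBstar (y+v) + G := rfl
  rw [hb]
  nlinarith [key, hadj]


/-- opB as a linear map -/
noncomputable def opBL (n : ℕ) : MatSp n →ₗ[ℝ] VecSp n where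
  toFun := opB
  map_add' X Y := by
    ext s; rcases s with i | j <;>
      simp [opB, PiLp.add_apply, Finset.sum_add_distrib]
  map_smul' t X := by
    ext s; rcases s with i | j <;>
      simp [opB, PiLp.smul_apply, Finset.mul_sum, smul_eq_mul]

lemma opBL_apply (X : MatSp n) : opBL n X = opB X := rfl

lemma range_eq : Set.range (opB (n := n)) = ↑(LinearMap.range (opBL n)) := by
  ext y; simp [LinearMap.mem_range, opBL_apply, Set.mem_range, eq_comm]

lemma range_closed : IsClosed (Set.range (opB (n := n))) := by
  rw [range_eq]; exact Submodule.closed_of_finiteDimensional _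

lemma phi_convex_ineq (G : MatSp n) (y z : VecSp n) (a b : ℝ)
    (ha : 0 ≤ a) (hb : 0 ≤ b) (hab : a + b = 1) :
    phiObj G (a • y + b • z) ≤ a * phiObj G y + b * phiObj G z := by
  have harg : ∀ q, (opBstar (a • y + b • z) + G) q
      = a * ((opBstar y + G) q) + b * ((opBstar z + G) q) := by
    intro q
    show (a • y + b • z) (Sum.inl q.1) + (a • y + b • z) (Sum.inr q.2) + G q = _
    have h1 : (a • y + b • z) (Sum.inl q.1) = a * y (Sum.inl q.1) + b * z (Sum.inl q.1) := rfl
    have h2 : (a • y + b • z) (Sum.inr q.2) = a * y (Sum.inr q.2) + b * z (Sum.inr q.2) := rfl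
    show _ = a * (opBstar y q + G q) + b * (opBstar z q + G q)
    have h3 : opBstar z q = z (Sum.inl q.1) + z (Sum.inr q.2) := rfl
    have h4 : opBstar y q = y (Sum.inl q.1) + y (Sum.inr q.2) := rfl
    have : G q = (a + b) * G q := by rw [hab, one_mul]
    rw [h1, h2, h3, h4]
    linear_combination this
  have hquad : ‖projC (opBstar (a • y + b • z) + G)‖ ^ 2
      ≤ a * ‖projC (opBstar y + G)‖ ^ 2 + b * ‖projC (opBstar z + G)‖ ^ 2 := by
    rw [normsq_eq, normsq_eq, normsq_eq, Finset.mul_sum, Finset.mul_sum,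
      ← Finset.sum_add_distrib]
    refine Finset.sum_le_sum fun q _ => ?_
    show max ((opBstar (a • y + b • z) + G) q) 0 ^ 2 ≤ _
    rw [harg q]
    set u := (opBstar y + G) q
    set w := (opBstar z + G) q
    show max (a * u + b * w) 0 ^ 2 ≤ a * max u 0 ^ 2 + b * max w 0 ^ 2
    have hA : u ≤ max u 0 := le_max_left _ _
    have hA0 : (0:ℝ) ≤ max u 0 := le_max_right _ _
    have hB : w ≤ max w 0 := le_max_left _ _
    have hB0 : (0:ℝ) ≤ max w 0 := le_max_right _ _
    have hm0 : (0:ℝ) ≤ max (a * u + b * w) 0 := le_max_right _ _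
    have hm : max (a * u + b * w) 0 ≤ a * max u 0 + b * max w 0 := by
      apply max_le _ (by positivity)
      have := mul_le_mul_of_nonneg_left hA ha
      have := mul_le_mul_of_nonneg_left hB hb
      linarith
    nlinarith [sq_nonneg (max u 0 - max w 0), mul_nonneg ha hb, hm, hm0]
  have hlin : ⟪bvec n, a • y + b • z⟫ = a * ⟪bvec n, y⟫ + b * ⟪bvec n, z⟫ := by
    rw [inner_add_right, real_inner_smul_right, real_inner_smul_right]
  simp only [phiObj]
  rw [hlin]
  nlinarith [hquad]

lemma phi_cont (G : MatSp n) : Continuous (phiObj G) := by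
  have h1 : Continuous fun y : VecSp n => ‖projC (opBstar y + G)‖ ^ 2 := by
    have he : (fun y : VecSp n => ‖projC (opBstar y + G)‖ ^ 2)
        = fun y => ∑ q, max ((opBstar y + G) q) 0 ^ 2 := by
      funext y; rw [normsq_eq]; rfl
    rw [he]
    refine continuous_finset_sum _ fun q _ => ?_
    have hc : Continuous fun y : VecSp n => (opBstar y + G) q := by
      have : (fun y : VecSp n => (opBstar y + G) q)
          = fun y => (y (Sum.inl q.1) + y (Sum.inr q.2)) + G q := rfl
      rw [this]
      exact (((EuclideanSpace.proj (Sum.inl q.1) : VecSp n →L[ℝ] ℝ).continuous.add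
        (EuclideanSpace.proj (Sum.inr q.2)).continuous).add continuous_const)
    exact (hc.max continuous_const).pow 2
  have h2 : Continuous fun y : VecSp n => ⟪bvec n, y⟫ :=
    Continuous.inner continuous_const continuous_id
  exact ((continuous_const.mul h1).sub h2).sub continuous_const

lemma nonneg_of_aux {D E : ℝ} (hE : 0 ≤ E) (h : ∀ t : ℝ, 0 < t → 0 ≤ D + t * E) :
    0 ≤ D := by
  by_contra hD
  push_neg at hD
  have ht : 0 < -D / (E + 1) := div_pos (by linarith) (by linarith)
  have := h _ ht
  have hkey : -D / (E + 1) * E * (E + 1) = -D * E := by field_simp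
  nlinarith [this, hE, hD]


lemma sum_inl_eq_sum_inr {y : VecSp n} (hy : y ∈ Set.range (opB (n := n))) :
    ∑ i, y (Sum.inl i) = ∑ j, y (Sum.inr j) := by
  obtain ⟨W, rfl⟩ := hy
  simp only [opB_apply_inl, opB_apply_inr]
  exact Finset.sum_comm ..

lemma coord_abs_le {ι : Type*} [Fintype ι] (y : EuclideanSpace ℝ ι) (s : ι) :
    |y s| ≤ ‖y‖ := by
  have h1 : y s ^ 2 ≤ ‖y‖ ^ 2 := by
    rw [normsq_eq]
    exact Finset.single_le_sum (f := fun t => y t ^ 2) (fun t _ => sq_nonneg _)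
      (Finset.mem_univ s)
  nlinarith [abs_nonneg (y s), sq_abs (y s), norm_nonneg y]

set_option maxHeartbeats 2000000 in
lemma level_bounded (G : MatSp n) (τ : ℝ) :
    Bornology.IsBounded {y : VecSp n | y ∈ Set.range (opB (n := n)) ∧ phiObj G y ≤ τ} := by
  set R : ℝ := max (τ + 2 * ‖G‖ + 2 + (1/2) * ‖G‖ ^ 2) 0 with hR
  refine (Metric.isBounded_closedBall (x := (0 : VecSp n)) (r := R)).subset ?_
  rintro y ⟨hy, hφ⟩
  rw [Metric.mem_closedBall, dist_zero_right]
  rcases eq_or_ne y 0 with h0 | h0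
  · rw [h0, norm_zero]; exact le_max_right _ _
  -- nontrivial case
  have hρ : 0 < ‖y‖ := norm_pos_iff.mpr h0
  set ρ := ‖y‖ with hρdef
  -- n ≥ 1 since y ≠ 0 forces a nonempty index
  have hn : 1 ≤ n := by
    by_contra hcon
    push_neg at hcon
    apply h0
    ext s
    rcases s with i | j
    · exact absurd i.isLt (by omega)
    · exact absurd j.isLt (by omega)
  have hn1 : (1:ℝ) ≤ (n:ℝ) := by exact_mod_cast hn
  set T : ℝ := ∑ i, y (Sum.inl i) with hT
  have hTeq : ∑ j, y (Sum.inr j) = T := (sum_inl_eq_sum_inr hy).symm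
  -- Cauchy-Schwarz bound for T
  have hbnorm : ‖bvec n‖ ^ 2 = 2 * n := by
    rw [normsq_eq]
    simp [bvec, Finset.card_univ]
    push_cast
    ring
  have hinner2T : ⟪bvec n, y⟫ = 2 * T := by
    rw [inner_eq_sum, Fintype.sum_sum_type]
    simp only [bvec, one_mul]
    rw [hTeq, ← hT]
    ring
  have hCS : |(2:ℝ) * T| ≤ ‖bvec n‖ * ρ := by
    rw [← hinner2T]
    exact abs_real_inner_le_norm _ _
  have hu0 : (0:ℝ) ≤ ‖bvec n‖ := norm_nonneg _
  have hule : ‖bvec n‖ ≤ (3/2) * n := by nlinarith [hbnorm, hn1, hu0]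
  have hTlow : -(3/4) * n * ρ ≤ T := by
    have h1 := (abs_le.mp hCS).1
    nlinarith [mul_le_mul_of_nonneg_right hule hρ.le]
  -- the construction
  set r : Fin n → ℝ := fun i => 1 + ρ⁻¹ * y (Sum.inl i) with hr
  set c : Fin n → ℝ := fun j => 1 + ρ⁻¹ * y (Sum.inr j) with hc
  set S : ℝ := n + ρ⁻¹ * T with hS
  have hSpos : (n:ℝ)/4 ≤ S := by
    have h2 : ρ⁻¹ * (-(3/4) * n * ρ) ≤ ρ⁻¹ * T :=
      mul_le_mul_of_nonneg_left hTlow (inv_nonneg.mpr hρ.le)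
    have h3 : ρ * ρ⁻¹ = 1 := mul_inv_cancel₀ (ne_of_gt hρ)
    nlinarith [h2, h3]
  have hS0 : 0 < S := lt_of_lt_of_le (by linarith) hSpos
  have hcoord : ∀ s, |y s| ≤ ρ := fun s => coord_abs_le y s
  have hr01 : ∀ i, 0 ≤ r i ∧ r i ≤ 2 := by
    intro i
    have := hcoord (Sum.inl i)
    have habs := abs_le.mp this
    have h3 : ρ⁻¹ * ρ = 1 := inv_mul_cancel₀ (ne_of_gt hρ)
    have h4 : ρ⁻¹ * (-ρ) = -1 := by rw [mul_neg, h3]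
    constructor
    · have h5 : ρ⁻¹ * (-ρ) ≤ ρ⁻¹ * y (Sum.inl i) :=
        mul_le_mul_of_nonneg_left habs.1 (inv_nonneg.mpr hρ.le)
      simp only [hr]; linarith
    · have h5 : ρ⁻¹ * y (Sum.inl i) ≤ ρ⁻¹ * ρ :=
        mul_le_mul_of_nonneg_left habs.2 (inv_nonneg.mpr hρ.le)
      simp only [hr]; linarith
  have hc01 : ∀ j, 0 ≤ c j ∧ c j ≤ 2 := by
    intro j
    have := hcoord (Sum.inr j)
    have habs := abs_le.mp this
    have h3 : ρ⁻¹ * ρ = 1 := inv_mul_cancel₀ (ne_of_gt hρ)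
    have h4 : ρ⁻¹ * (-ρ) = -1 := by rw [mul_neg, h3]
    constructor
    · have h5 : ρ⁻¹ * (-ρ) ≤ ρ⁻¹ * y (Sum.inr j) :=
        mul_le_mul_of_nonneg_left habs.1 (inv_nonneg.mpr hρ.le)
      simp only [hc]; linarith
    · have h5 : ρ⁻¹ * y (Sum.inr j) ≤ ρ⁻¹ * ρ :=
        mul_le_mul_of_nonneg_left habs.2 (inv_nonneg.mpr hρ.le)
      simp only [hc]; linarith
  have hrsum : ∑ i, r i = S := by
    simp only [hr, hS, Finset.sum_add_distrib, Finset.sum_const, Finset.card_univ,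
      Fintype.card_fin, nsmul_eq_mul, mul_one, ← Finset.mul_sum, ← hT]
  have hcsum : ∑ j, c j = S := by
    simp only [hc, hS, Finset.sum_add_distrib, Finset.sum_const, Finset.card_univ,
      Fintype.card_fin, nsmul_eq_mul, mul_one, ← Finset.mul_sum, hTeq]
  set X₀ : MatSp n := WithLp.toLp 2 (fun q => r q.1 * c q.2 / S : (Fin n × Fin n) → ℝ) with hX₀
  have hX₀app : ∀ q, X₀ q = r q.1 * c q.2 / S := fun q => rfl
  have hX₀nn : ∀ q, 0 ≤ X₀ q := fun q => by
    rw [hX₀app]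
    exact div_nonneg (mul_nonneg (hr01 q.1).1 (hc01 q.2).1) hS0.le
  have hrow : ∀ i, ∑ j, X₀ (i, j) = r i := by
    intro i
    simp only [hX₀app]
    rw [← Finset.sum_div, ← Finset.mul_sum, hcsum, mul_div_assoc,
      div_self (ne_of_gt hS0), mul_one]
  have hcol : ∀ j, ∑ i, X₀ (i, j) = c j := by
    intro j
    simp only [hX₀app]
    rw [← Finset.sum_div, ← Finset.sum_mul, hrsum, mul_comm, mul_div_assoc,
      div_self (ne_of_gt hS0), mul_one]
  have hBX : opB X₀ = bvec n + ρ⁻¹ • y := by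
    ext s
    rcases s with i | j
    · show ∑ j, X₀ (i, j) = (bvec n + ρ⁻¹ • y) (Sum.inl i)
      rw [hrow i]
      rfl
    · show ∑ i, X₀ (i, j) = (bvec n + ρ⁻¹ • y) (Sum.inr j)
      rw [hcol j]
      rfl
  have hinnerlow : ⟪opB X₀ - bvec n, y⟫ = ρ := by
    rw [hBX, add_sub_cancel_left, real_inner_smul_left, real_inner_self_eq_norm_sq, ← hρdef]
    field_simp
  have hXnormsq : ‖X₀‖ ^ 2 ≤ 4 := by
    have heq : ‖X₀‖ ^ 2 = (∑ i, r i ^ 2) * (∑ j, c j ^ 2) / S ^ 2 := by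
      rw [normsq_eq, Fintype.sum_prod_type]
      rw [Finset.sum_mul_sum, Finset.sum_div]
      refine Finset.sum_congr rfl fun i _ => ?_
      rw [Finset.sum_div]
      refine Finset.sum_congr rfl fun j _ => ?_
      rw [hX₀app]
      rw [div_pow, mul_pow]
    have hr2 : ∑ i, r i ^ 2 ≤ 2 * S := by
      rw [← hrsum, Finset.mul_sum]
      exact Finset.sum_le_sum fun i _ => by nlinarith [(hr01 i).1, (hr01 i).2]
    have hc2 : ∑ j, c j ^ 2 ≤ 2 * S := by
      rw [← hcsum, Finset.mul_sum]
      exact Finset.sum_le_sum fun j _ => by nlinarith [(hc01 j).1, (hc01 j).2]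
    have hrnn : 0 ≤ ∑ i, r i ^ 2 := Finset.sum_nonneg fun i _ => sq_nonneg _
    rw [heq, div_le_iff₀ (by positivity)]
    nlinarith [hr2, hc2, hrnn, hS0]
  have hXnorm : ‖X₀‖ ≤ 2 := by nlinarith [norm_nonneg X₀, hXnormsq]
  have hXG : -(2 * ‖G‖) ≤ ⟪X₀, G⟫ := by
    have h1 := abs_real_inner_le_norm X₀ G
    have h2 := (abs_le.mp h1).1
    nlinarith [mul_le_mul_of_nonneg_right hXnorm (norm_nonneg G)]
  have hmain := phi_lower G y X₀ hX₀nn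
  rw [hinnerlow] at hmain
  have : ρ ≤ τ + 2 * ‖G‖ + 2 + (1/2) * ‖G‖ ^ 2 := by nlinarith [hmain, hφ, hXG, hXnormsq]
  exact le_trans this (le_max_left _ _)


lemma opB_zero : opB (0 : MatSp n) = 0 := by
  ext s
  rcases s with i | j <;> simp [opB]

lemma bvec_mem_range (hn : 1 ≤ n) : bvec n ∈ Set.range (opB (n := n)) := by
  refine ⟨WithLp.toLp 2 (fun _ => (n:ℝ)⁻¹ : (Fin n × Fin n) → ℝ), ?_⟩
  have hn0 : (n:ℝ) ≠ 0 := Nat.cast_ne_zero.mpr (by omega)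
  ext s
  rcases s with i | j <;>
    simp [opB, bvec, Finset.sum_const, Finset.card_univ, mul_inv_cancel₀ hn0]

lemma level_closed (G : MatSp n) (τ : ℝ) :
    IsClosed {y : VecSp n | y ∈ Set.range (opB (n := n)) ∧ phiObj G y ≤ τ} :=
  IsClosed.inter range_closed (isClosed_le (phi_cont G) continuous_const)

lemma level_convex (G : MatSp n) (τ : ℝ) :
    Convex ℝ {y : VecSp n | y ∈ Set.range (opB (n := n)) ∧ phiObj G y ≤ τ} := by
  intro y hy z hz a b ha hb hab
  obtain ⟨hy1, hy2⟩ := hy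
  obtain ⟨hz1, hz2⟩ := hz
  constructor
  · obtain ⟨Y, hY⟩ := hy1
    obtain ⟨Z, hZ⟩ := hz1
    exact ⟨a • Y + b • Z, by
      rw [← opBL_apply, map_add, map_smul, map_smul, opBL_apply, opBL_apply, hY, hZ]⟩
  · calc phiObj G (a • y + b • z) ≤ a * phiObj G y + b * phiObj G z :=
          phi_convex_ineq G y z a b ha hb hab
      _ ≤ a * τ + b * τ := add_le_add (mul_le_mul_of_nonneg_left hy2 ha)
          (mul_le_mul_of_nonneg_left hz2 hb)
      _ = τ := by rw [← add_mul, hab, one_mul]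

lemma exists_kkt (G : MatSp n) :
    ∃ (X : MatSp n) (y : VecSp n),
        X = projC (opBstar y + G) ∧ opB X = bvec n ∧ y ∈ Set.range (opB (n := n)) := by
  rcases Nat.eq_zero_or_pos n with hn | hn
  · refine ⟨projC (opBstar 0 + G), 0, rfl, ?_, ⟨0, opB_zero⟩⟩
    ext s
    rcases s with i | j
    · exact absurd i.isLt (by omega)
    · exact absurd j.isLt (by omega)
  · set K := {y : VecSp n | y ∈ Set.range (opB (n := n)) ∧ phiObj G y ≤ phiObj G 0} with hK
    have h0K : (0 : VecSp n) ∈ K := ⟨⟨0, opB_zero⟩, le_rfl⟩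
    have hKc : IsCompact K :=
      Metric.isCompact_of_isClosed_isBounded (level_closed G _) (level_bounded G _)
    obtain ⟨y₀, hy₀K, hminOn⟩ := hKc.exists_isMinOn ⟨0, h0K⟩ ((phi_cont G).continuousOn)
    have hmin : ∀ z ∈ K, phiObj G y₀ ≤ phiObj G z := fun z hz => isMinOn_iff.mp hminOn z hz
    have hy₀r : y₀ ∈ Set.range (opB (n := n)) := hy₀K.1
    have hglobal : ∀ z ∈ Set.range (opB (n := n)), phiObj G y₀ ≤ phiObj G z := by
      intro z hz
      rcases le_or_gt (phiObj G z) (phiObj G 0) with h | h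
      · exact hmin z ⟨hz, h⟩
      · exact le_trans (hmin 0 h0K) h.le
    set w := opB (projC (opBstar y₀ + G)) with hw
    have hkey : ∀ v ∈ Set.range (opB (n := n)), 0 ≤ ⟪w - bvec n, v⟫ := by
      intro v hv
      have hD : ⟪w - bvec n, v⟫ = (⟪w, v⟫ - ⟪bvec n, v⟫) := by rw [inner_sub_left]
      rw [hD]
      apply nonneg_of_aux (E := (1/2) * ‖opBstar v‖ ^ 2) (by positivity)
      intro t ht
      obtain ⟨Y, hY⟩ := hy₀r
      obtain ⟨V, hV⟩ := hv
      have hmem : y₀ + t • v ∈ Set.range (opB (n := n)) :=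
        ⟨Y + t • V, by rw [← opBL_apply, map_add, map_smul, opBL_apply, opBL_apply, hY, hV]⟩
      have h1 := hglobal _ hmem
      have h2 := phi_upper G y₀ (t • v)
      rw [← hw] at h2
      have h4 : ‖opBstar (t • v)‖ ^ 2 = t ^ 2 * ‖opBstar v‖ ^ 2 := by
        rw [opBstar_smul, norm_smul, mul_pow, Real.norm_eq_abs, sq_abs]
      have h5 : ⟪w, t • v⟫ = t * ⟪w, v⟫ := real_inner_smul_right _ _ _
      have h6 : ⟪bvec n, t • v⟫ = t * ⟪bvec n, v⟫ := real_inner_smul_right _ _ _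
      rw [h4, h5, h6] at h2
      have h7 := le_trans h1 h2
      nlinarith [h7, ht]
    have hwmem : w - bvec n ∈ Set.range (opB (n := n)) := by
      obtain ⟨Xb, hXb⟩ := bvec_mem_range (n := n) hn
      exact ⟨projC (opBstar y₀ + G) - Xb, by
        rw [← opBL_apply, map_sub, opBL_apply, opBL_apply, hXb, ← hw]⟩
    have hnegmem : -(w - bvec n) ∈ Set.range (opB (n := n)) := by
      obtain ⟨Z, hZ⟩ := hwmem
      exact ⟨-Z, by rw [← opBL_apply, map_neg, opBL_apply, hZ]⟩
    have hzero : w - bvec n = 0 := by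
      have h1 := hkey _ hwmem
      have h2 := hkey _ hnegmem
      rw [inner_neg_right] at h2
      have h3 : ⟪w - bvec n, w - bvec n⟫ = 0 := le_antisymm (by linarith) real_inner_self_nonneg
      exact inner_self_eq_zero.mp h3
    exact ⟨projC (opBstar y₀ + G), y₀, rfl, sub_eq_zero.mp hzero, hy₀r⟩

end aux

/-- the KKT system for the projection onto the Birkhoff polytope has a
nonempty solution set, and every level set of the dual objective `φ` over `Range(𝓑)` is
convex, closed and bounded. -/
theorem stmt_6 (n : ℕ) (G : MatSp n) :
    (∃ (X : MatSp n) (y : VecSp n),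
        X = projC (opBstar y + G) ∧ opB X = bvec n ∧ y ∈ Set.range (opB (n := n))) ∧
    ∀ τ : ℝ,
      Convex ℝ {y : VecSp n | y ∈ Set.range (opB (n := n)) ∧ phiObj G y ≤ τ} ∧
      IsClosed {y : VecSp n | y ∈ Set.range (opB (n := n)) ∧ phiObj G y ≤ τ} ∧
      Bornology.IsBounded {y : VecSp n | y ∈ Set.range (opB (n := n)) ∧ phiObj G y ≤ τ} := by
  exact ⟨exists_kkt G, fun τ => ⟨level_convex G τ, level_closed G τ, level_bounded G τ⟩⟩
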